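/- 𝒵·(𝔗 − D⁻¹ + I) = I − 𝒥. -/

import Mathlib

/-!
Write `K = JΠ`. Stationarity and row-stochasticity give `KP = PK = K`, and `∑ πᵢ = 1` gives
`K² = K`; hence `MK = K`, so `M⁻¹K = K` and `Z(I - P) = M⁻¹(M - K) - K(I - P) = I - K`.
Conjugation by `Π^{1/2}` is multiplicative and fixes the diagonal matrix `D⁻¹`, so
`𝔗 - D⁻¹ + I` is the conjugate of `I - P`, and the conjugate of `K` is `𝒥`.
-/

open Matrix Finset Filter Topology

/-- The all-ones n×n matrix `J = e eᵀ`. -/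
noncomputable def Jmat (n : ℕ) : Matrix (Fin n) (Fin n) ℝ :=
  Matrix.of fun _ _ => (1 : ℝ)

/-- `Π^{1/2}`: the diagonal matrix with entries `√(π_i)`. -/
noncomputable def Pih (n : ℕ) (pv : Fin n → ℝ) : Matrix (Fin n) (Fin n) ℝ :=
  Matrix.diagonal fun i => Real.sqrt (pv i)

/-- `Π^{-1/2}`: the diagonal matrix with entries `1/√(π_i)`. -/
noncomputable def Pinvh (n : ℕ) (pv : Fin n → ℝ) : Matrix (Fin n) (Fin n) ℝ :=
  Matrix.diagonal fun i => (Real.sqrt (pv i))⁻¹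

theorem mul_mul_mul_conj {M : Type*} [Monoid M] {s t : M} (hts : t * s = 1) (a b : M) :
    s * a * t * (s * b * t) = s * (a * b) * t := by
  simp only [mul_assoc, ← mul_assoc t s, hts, one_mul]

namespace Matrix

variable {ι R : Type*} [Fintype ι] [DecidableEq ι] [CommRing R]

theorem inv_one_sub_add_sub_mul_one_sub {P K : Matrix ι ι R} (hPK : P * K = K) (hKP : K * P = K)
    (hKK : IsIdempotentElem K) (hM : IsUnit (1 - P + K)) :
    ((1 - P + K)⁻¹ - K) * (1 - P) = 1 - K := by
  have hdet : IsUnit (1 - P + K).det := (isUnit_iff_isUnit_det _).mp hM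
  have hMK : (1 - P + K) * K = K := by
    rw [add_mul, sub_mul, one_mul, hPK, hKK.eq, sub_self, zero_add]
  have hMinvK : (1 - P + K)⁻¹ * K = K := by
    calc (1 - P + K)⁻¹ * K = (1 - P + K)⁻¹ * ((1 - P + K) * K) := by rw [hMK]
      _ = K := nonsing_inv_mul_cancel_left _ _ hdet
  calc ((1 - P + K)⁻¹ - K) * (1 - P)
      = (1 - P + K)⁻¹ * ((1 - P + K) - K) - K * (1 - P) := by
        rw [add_sub_cancel_right, sub_mul]
    _ = 1 - K := by
        rw [mul_sub, nonsing_inv_mul _ hdet, hMinvK, mul_sub, mul_one, hKP, sub_self, sub_zero]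

end Matrix

section Stationary

variable {n : ℕ} {P : Matrix (Fin n) (Fin n) ℝ} {pv : Fin n → ℝ}

theorem Jmat_mul_diagonal_apply (pv : Fin n → ℝ) (i j : Fin n) :
    (Jmat n * diagonal pv) i j = pv j := by
  simp [Jmat]

theorem mul_Jmat_mul_diagonal (hP_row : ∀ i, ∑ j, P i j = 1) :
    P * (Jmat n * diagonal pv) = Jmat n * diagonal pv := by
  ext i j
  rw [mul_apply, Jmat_mul_diagonal_apply]
  simp_rw [Jmat_mul_diagonal_apply, ← sum_mul, hP_row, one_mul]

theorem Jmat_mul_diagonal_mul (hpv_stat : vecMul pv P = pv) :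
    Jmat n * diagonal pv * P = Jmat n * diagonal pv := by
  ext i j
  rw [mul_apply, Jmat_mul_diagonal_apply]
  simp_rw [Jmat_mul_diagonal_apply]
  exact congrFun hpv_stat j

theorem isIdempotentElem_Jmat_mul_diagonal (hpv_sum : ∑ i, pv i = 1) :
    IsIdempotentElem (Jmat n * diagonal pv) := by
  ext i j
  rw [mul_apply, Jmat_mul_diagonal_apply]
  simp_rw [Jmat_mul_diagonal_apply, ← sum_mul, hpv_sum, one_mul]

theorem Pinvh_mul_Pih (hpv_pos : ∀ i, 0 < pv i) : Pinvh n pv * Pih n pv = 1 := by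
  rw [Pinvh, Pih, diagonal_mul_diagonal, ← diagonal_one]
  exact congrArg diagonal (funext fun i => inv_mul_cancel₀ (Real.sqrt_pos.2 (hpv_pos i)).ne')

theorem Pih_mul_Pinvh (hpv_pos : ∀ i, 0 < pv i) : Pih n pv * Pinvh n pv = 1 := by
  rw [Pinvh, Pih, diagonal_mul_diagonal, ← diagonal_one]
  exact congrArg diagonal (funext fun i => mul_inv_cancel₀ (Real.sqrt_pos.2 (hpv_pos i)).ne')

theorem diagonal_mul_Pinvh (pv : Fin n → ℝ) : diagonal pv * Pinvh n pv = Pih n pv := by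
  rw [Pinvh, Pih, diagonal_mul_diagonal]
  exact congrArg diagonal (funext fun i => Real.div_sqrt)

theorem Pih_mul_diagonal_mul_Pinvh (hpv_pos : ∀ i, 0 < pv i) (e : Fin n → ℝ) :
    Pih n pv * diagonal e * Pinvh n pv = diagonal e := by
  rw [Pih, (commute_diagonal _ _).eq, mul_assoc, ← Pih, Pih_mul_Pinvh hpv_pos, mul_one]

end Stationary

theorem Zc_mul_frakT_shift_general {n : ℕ}
    (P : Matrix (Fin n) (Fin n) ℝ)
    (hP_row : ∀ i, ∑ j, P i j = 1)
    (pv : Fin n → ℝ) (hpv_pos : ∀ i, 0 < pv i) (hpv_sum : ∑ i, pv i = 1)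
    (hpv_stat : Matrix.vecMul pv P = pv)
    (hM : IsUnit (1 - P + Jmat n * Matrix.diagonal pv))
    (d : Fin n → ℝ) :
    let Z := (1 - P + Jmat n * Matrix.diagonal pv)⁻¹ - Jmat n * Matrix.diagonal pv
    let Dinv := (Matrix.diagonal d)⁻¹
    let T := Pih n pv * (Dinv - P) * Pinvh n pv
    let Zc := Pih n pv * Z * Pinvh n pv
    let Jc := Pih n pv * Jmat n * Pih n pv
    Zc * (T - Dinv + 1) = 1 - Jc := by
  intro Z Dinv T Zc Jc
  have hZ : Z * (1 - P) = 1 - Jmat n * diagonal pv :=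
    inv_one_sub_add_sub_mul_one_sub (mul_Jmat_mul_diagonal hP_row)
      (Jmat_mul_diagonal_mul hpv_stat) (isIdempotentElem_Jmat_mul_diagonal hpv_sum) hM
  have hD : Pih n pv * Dinv * Pinvh n pv = Dinv := by
    simp only [Dinv]
    rw [inv_diagonal]
    exact Pih_mul_diagonal_mul_Pinvh hpv_pos _
  have hT : T - Dinv + 1 = Pih n pv * (1 - P) * Pinvh n pv := by
    simp only [T]
    rw [mul_sub, sub_mul, hD, mul_sub, sub_mul, mul_one, Pih_mul_Pinvh hpv_pos]
    abel
  calc Zc * (T - Dinv + 1) = Pih n pv * (Z * (1 - P)) * Pinvh n pv := by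
        rw [hT, mul_mul_mul_conj (Pinvh_mul_Pih hpv_pos)]
    _ = 1 - Jc := by
        rw [hZ, mul_sub, sub_mul, mul_one, Pih_mul_Pinvh hpv_pos, mul_assoc, mul_assoc,
          diagonal_mul_Pinvh, ← mul_assoc]

/-- `𝒵·(𝔗 − D⁻¹ + I) = I − 𝒥`. -/
theorem Zc_mul_frakT_shift {n : ℕ} (hn : 1 ≤ n)
    (P : Matrix (Fin n) (Fin n) ℝ)
    (hP_nonneg : ∀ i j, 0 ≤ P i j) (hP_row : ∀ i, ∑ j, P i j = 1)
    (pv : Fin n → ℝ) (hpv_pos : ∀ i, 0 < pv i) (hpv_sum : ∑ i, pv i = 1)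
    (hpv_stat : Matrix.vecMul pv P = pv)
    (hM : IsUnit (1 - P + Jmat n * Matrix.diagonal pv))
    (d : Fin n → ℝ) (hd_pos : ∀ i, 0 < d i) :
    let Z := (1 - P + Jmat n * Matrix.diagonal pv)⁻¹ - Jmat n * Matrix.diagonal pv
    let Dinv := (Matrix.diagonal d)⁻¹
    let T := Pih n pv * (Dinv - P) * Pinvh n pv
    let Zc := Pih n pv * Z * Pinvh n pv
    let Jc := Pih n pv * Jmat n * Pih n pv
    Zc * (T - Dinv + 1) = 1 - Jc :=
  Zc_mul_frakT_shift_general P hP_row pv hpv_pos hpv_sum hpv_stat hM d
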